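/- arXiv:2602.20581 — 3 statements merged into one kernel-verified Lean document; each statement's English description precedes it below -/
import Mathlib

section
/- Weak convergence implies uniform value convergence (deterministic core): Let Z be a compact metric space and d ≥ 1. Let Q_m (m ∈ ℕ) and Q be Borel probability measures on ℝ^d such that Q_m converges weakly to Q. Let f : Z × ℝ^d → ℝ be continuous, and let w : ℝ^d → [0, ∞) be continuous with |f(z, θ)| ≤ w(θ) for all z ∈ Z and θ ∈ ℝ^d, and with w(θ) → ∞ as ‖θ‖ → ∞. Suppose there exist δ > 0 and C < ∞ such that ∫ w(θ)^{1+δ} dQ_m(θ) ≤ C for all m and ∫ w(θ)^{1+δ} dQ(θ) ≤ C. Then sup_{z ∈ Z} |∫ f(z, θ) dQ_m(θ) − ∫ f(z, θ) dQ(θ)| → 0 as m → ∞. -/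
open MeasureTheory Filter

section Aux

variable {E : Type*}

/-- pointwise: if `M ≤ w` and `1 ≤ M` then `w ≤ w^(1+δ)/M^δ`. -/
private lemma aux_rpow_tail {M δ wv : ℝ} (hM : 1 ≤ M) (hδ : 0 < δ) (hMw : M ≤ wv) :
    wv ≤ wv ^ (1 + δ) / M ^ δ := by
  have hM0 : (0:ℝ) < M := lt_of_lt_of_le one_pos hM
  have hMδ : (0:ℝ) < M ^ δ := Real.rpow_pos_of_pos hM0 δ
  have hw0 : (0:ℝ) < wv := lt_of_lt_of_le hM0 hMw
  rw [le_div_iff₀ hMδ]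
  have h1 : wv ^ (1 + δ) = wv * wv ^ δ := by
    rw [Real.rpow_add hw0, Real.rpow_one]
  rw [h1]
  have h2 : M ^ δ ≤ wv ^ δ := Real.rpow_le_rpow (le_of_lt hM0) hMw (le_of_lt hδ)
  nlinarith [Real.rpow_nonneg (le_of_lt hM0) δ]

/-- pointwise clamp bound. -/
private lemma aux_clamp_bound {M δ wv fv : ℝ} (hM : 1 ≤ M) (hδ : 0 < δ)
    (hw0 : 0 ≤ wv) (hfw : |fv| ≤ wv) :
    |fv - max (-M) (min M fv)| ≤ wv ^ (1 + δ) / M ^ δ := by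
  have hM0 : (0:ℝ) < M := lt_of_lt_of_le one_pos hM
  have hrhs0 : 0 ≤ wv ^ (1 + δ) / M ^ δ :=
    div_nonneg (Real.rpow_nonneg hw0 _) (le_of_lt (Real.rpow_pos_of_pos hM0 δ))
  rcases le_or_gt wv M with h | h
  · -- clamp is identity
    have h1 : fv ≤ M := le_trans (le_trans (le_abs_self fv) hfw) h
    have h2 : -M ≤ fv := by
      have := neg_abs_le fv
      have := neg_le_neg (le_trans hfw h)
      linarith [neg_abs_le fv]
    have : max (-M) (min M fv) = fv := by
      rw [min_eq_right h1, max_eq_right h2]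
    rw [this]
    simpa using hrhs0
  · have htail : wv ≤ wv ^ (1 + δ) / M ^ δ := aux_rpow_tail hM hδ (le_of_lt h)
    refine le_trans ?_ htail
    rcases le_total M fv with h1 | h1
    · rw [min_eq_left h1, max_eq_right (by linarith : -M ≤ M)]
      have : fv ≤ wv := le_trans (le_abs_self fv) hfw
      rw [abs_of_nonneg (by linarith)]
      linarith
    · rcases le_total fv (-M) with h2 | h2
      · rw [min_eq_right (by linarith : fv ≤ M), max_eq_left h2]
        have : -fv ≤ wv := le_trans (neg_le_abs fv) hfw
        rw [abs_of_nonpos (by linarith)]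
        linarith
      · rw [min_eq_right (by linarith : fv ≤ M), max_eq_right h2]
        simpa using hw0
end Aux

section Aux2

variable {α : Type*} [MeasurableSpace α] [TopologicalSpace α] [OpensMeasurableSpace α]

private lemma aux_int (μ : Measure α) [IsProbabilityMeasure μ] {g : α → ℝ}
    (hg : Continuous g) (hg0 : ∀ x, 0 ≤ g x) {C : ℝ}
    (hC : ∫⁻ x, ENNReal.ofReal (g x) ∂μ ≤ ENNReal.ofReal C) :
    Integrable g μ ∧ ∫ x, g x ∂μ ≤ max C 0 := by
  have hmeas := hg.aestronglyMeasurable (μ := μ)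
  have hfin : HasFiniteIntegral g μ := by
    rw [hasFiniteIntegral_iff_norm]
    calc ∫⁻ a, ENNReal.ofReal ‖g a‖ ∂μ = ∫⁻ a, ENNReal.ofReal (g a) ∂μ := by
          apply lintegral_congr; intro a; rw [Real.norm_eq_abs, abs_of_nonneg (hg0 a)]
      _ ≤ ENNReal.ofReal C := hC
      _ < ⊤ := ENNReal.ofReal_lt_top
  refine ⟨⟨hmeas, hfin⟩, ?_⟩
  rw [integral_eq_lintegral_of_nonneg_ae (.of_forall hg0) hmeas]
  calc (∫⁻ a, ENNReal.ofReal (g a) ∂μ).toReal ≤ (ENNReal.ofReal C).toReal :=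
        ENNReal.toReal_mono ENNReal.ofReal_ne_top hC
    _ = max C 0 := ENNReal.toReal_ofReal'

end Aux2

/-- Weak convergence implies uniform value convergence (deterministic core):
let `Z` be a compact metric space, `Qm m → Q` weakly (probability measures on
`ℝ^d`), `f : Z × ℝ^d → ℝ` continuous with a continuous coercive envelope `w`
(`|f (z, θ)| ≤ w θ`), and suppose the `(1+δ)`-th moments of `w` under all the
measures are uniformly bounded by `C`.  Then
`sup_{z ∈ Z} |∫ f (z, ·) dQm - ∫ f (z, ·) dQ| → 0`. -/
theorem weak_convergence_uniform_value_convergence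
    {Z : Type*} [MetricSpace Z] [CompactSpace Z]
    {d : ℕ} (hd : 1 ≤ d)
    (Qm : ℕ → Measure (EuclideanSpace ℝ (Fin d)))
    (Q : Measure (EuclideanSpace ℝ (Fin d)))
    (hQm : ∀ m, IsProbabilityMeasure (Qm m)) (hQ : IsProbabilityMeasure Q)
    (hweak : ∀ g : BoundedContinuousFunction (EuclideanSpace ℝ (Fin d)) ℝ,
      Tendsto (fun m => ∫ θ, g θ ∂(Qm m)) atTop (nhds (∫ θ, g θ ∂Q)))
    (f : Z × EuclideanSpace ℝ (Fin d) → ℝ) (hf : Continuous f)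
    (w : EuclideanSpace ℝ (Fin d) → ℝ) (hw : Continuous w)
    (hw0 : ∀ θ, 0 ≤ w θ)
    (henv : ∀ z θ, |f (z, θ)| ≤ w θ)
    (hcoercive : Tendsto w (comap (fun θ => ‖θ‖) atTop) atTop)
    (δ C : ℝ) (hδ : 0 < δ)
    (hmomQm : ∀ m, ∫⁻ θ, ENNReal.ofReal (w θ ^ (1 + δ)) ∂(Qm m) ≤ ENNReal.ofReal C)
    (hmomQ : ∫⁻ θ, ENNReal.ofReal (w θ ^ (1 + δ)) ∂Q ≤ ENNReal.ofReal C) :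
    Tendsto (fun m => ⨆ z : Z, |(∫ θ, f (z, θ) ∂(Qm m)) - ∫ θ, f (z, θ) ∂Q|)
      atTop (nhds 0) := by
  classical
  set p : EuclideanSpace ℝ (Fin d) → ℝ := fun θ => w θ ^ (1 + δ) with hp
  set C' : ℝ := max C 0 with hC'
  have hC'0 : (0:ℝ) ≤ C' := le_max_right _ _
  have hpcont : Continuous p := by
    rw [hp]
    exact hw.rpow_const fun θ => Or.inr (by positivity)
  have hp0 : ∀ θ, 0 ≤ p θ := fun θ => by
    simp only [hp]; exact Real.rpow_nonneg (hw0 θ) _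
  -- per-measure integrability package
  have key : ∀ (μ : Measure (EuclideanSpace ℝ (Fin d))), IsProbabilityMeasure μ →
      (∫⁻ θ, ENNReal.ofReal (p θ) ∂μ ≤ ENNReal.ofReal C) →
      Integrable p μ ∧ (∫ θ, p θ ∂μ) ≤ C' ∧ Integrable w μ ∧
        ∀ z : Z, Integrable (fun θ => f (z, θ)) μ := by
    intro μ hμ hmom
    haveI := hμ
    obtain ⟨hip, hintp⟩ := aux_int μ hpcont hp0 hmom
    have hiw : Integrable w μ := by
      refine Integrable.mono' ((integrable_const 1).add hip)
        (hw.aestronglyMeasurable) (.of_forall fun θ => ?_)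
      rw [Real.norm_eq_abs, abs_of_nonneg (hw0 θ)]
      rcases le_or_gt (w θ) 1 with h | h
      · have : 0 ≤ p θ := hp0 θ
        simp only [Pi.add_apply]; linarith
      · have h2 : w θ ^ (1:ℝ) ≤ w θ ^ (1 + δ) :=
          Real.rpow_le_rpow_of_exponent_le h.le (by linarith)
        rw [Real.rpow_one] at h2
        simp only [Pi.add_apply, hp]
        linarith
    refine ⟨hip, hintp, hiw, fun z => ?_⟩
    exact Integrable.mono' hiw ((hf.comp (Continuous.prodMk_right z)).aestronglyMeasurable)
      (.of_forall fun θ => by rw [Real.norm_eq_abs]; exact henv z θ)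
  rw [Metric.tendsto_atTop]
  intro ε hε
  set ε' : ℝ := ε / 10 with hε'def
  have hε'0 : 0 < ε' := by positivity
  -- choose M
  obtain ⟨M, hM1, hMδ⟩ : ∃ M : ℝ, 1 ≤ M ∧ C' / M ^ δ ≤ ε' := by
    refine ⟨max 1 ((C' / ε') ^ (1/δ)), le_max_left _ _, ?_⟩
    have hbase : (0:ℝ) ≤ C' / ε' := by positivity
    have h1 : (C' / ε') ^ (1/δ) ≤ max 1 ((C' / ε') ^ (1/δ)) := le_max_right _ _
    have hM0 : (0:ℝ) < max 1 ((C' / ε') ^ (1/δ)) := lt_of_lt_of_le one_pos (le_max_left _ _)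
    have h2 : C' / ε' ≤ (max 1 ((C' / ε') ^ (1/δ))) ^ δ := by
      calc C' / ε' = ((C' / ε') ^ (1/δ)) ^ δ := by
            rw [← Real.rpow_mul hbase, one_div, inv_mul_cancel₀ (ne_of_gt hδ), Real.rpow_one]
        _ ≤ _ := Real.rpow_le_rpow (Real.rpow_nonneg hbase _) h1 hδ.le
    rw [div_le_iff₀ (Real.rpow_pos_of_pos hM0 δ)]
    rw [div_le_iff₀ hε'0] at h2
    linarith [h2]
  have hMpow : (0:ℝ) < M ^ δ := Real.rpow_pos_of_pos (lt_of_lt_of_le one_pos hM1) δ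
  -- choose R
  obtain ⟨R, hR⟩ : ∃ R : ℝ, ∀ θ : EuclideanSpace ℝ (Fin d), R ≤ ‖θ‖ → M ≤ w θ := by
    have h1 : ∀ᶠ b in atTop, ∀ θ : EuclideanSpace ℝ (Fin d), ‖θ‖ = b → M ≤ w θ :=
      eventually_comap.mp (hcoercive.eventually (eventually_ge_atTop M))
    obtain ⟨R, hR⟩ := eventually_atTop.mp h1
    exact ⟨R, fun θ hθ => hR ‖θ‖ hθ θ rfl⟩
  -- uniform continuity on Z × closedBall
  set K : Set (EuclideanSpace ℝ (Fin d)) := Metric.closedBall (0:EuclideanSpace ℝ (Fin d)) R with hK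
  have hKc : IsCompact ((Set.univ : Set Z) ×ˢ K) :=
    isCompact_univ.prod (isCompact_closedBall _ _)
  obtain ⟨η, hη0, hηs⟩ :=
    (Metric.uniformContinuousOn_iff.mp
      (hKc.uniformContinuousOn_of_continuous hf.continuousOn)) ε' hε'0
  -- pointwise comparison bound
  have hptw : ∀ z z' : Z, dist z z' < η → ∀ θ : EuclideanSpace ℝ (Fin d),
      |f (z, θ) - f (z', θ)| ≤ ε' + (2 / M ^ δ) * p θ := by
    intro z z' hzz θ
    by_cases hθ : θ ∈ K
    · have hd : dist ((z, θ) : Z × EuclideanSpace ℝ (Fin d)) (z', θ) < η := by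
        rw [Prod.dist_eq]; simp only [dist_self]
        rw [sup_eq_left.mpr dist_nonneg]; exact hzz
      have := hηs (z, θ) ⟨Set.mem_univ _, hθ⟩ (z', θ) ⟨Set.mem_univ _, hθ⟩ hd
      rw [Real.dist_eq] at this
      have h2 : 0 ≤ (2 / M ^ δ) * p θ := by
        have := hp0 θ; positivity
      linarith
    · have hRθ : M ≤ w θ := by
        apply hR
        simp only [hK, Metric.mem_closedBall, dist_zero_right, not_le] at hθ
        exact hθ.le
      have ht := aux_rpow_tail hM1 hδ hRθ
      have h1 := abs_sub (f (z, θ)) (f (z', θ))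
      have h2 := henv z θ
      have h3 := henv z' θ
      have habs : |f (z, θ) - f (z', θ)| ≤ 2 * w θ := by
        calc |f (z, θ) - f (z', θ)| ≤ |f (z, θ)| + |f (z', θ)| := abs_sub _ _
          _ ≤ 2 * w θ := by linarith
      calc |f (z, θ) - f (z', θ)| ≤ 2 * w θ := habs
        _ ≤ 2 * (p θ / M ^ δ) := by linarith
        _ = (2 / M ^ δ) * p θ := by ring
        _ ≤ ε' + (2 / M ^ δ) * p θ := by linarith
  -- clamp BCFs
  set g : Z → BoundedContinuousFunction (EuclideanSpace ℝ (Fin d)) ℝ := fun z0 =>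
    BoundedContinuousFunction.ofNormedAddCommGroup
      (fun θ => max (-M) (min M (f (z0, θ))))
      (continuous_const.max (continuous_const.min (hf.comp (Continuous.prodMk_right z0))))
      M
      (by
        intro θ
        rw [Real.norm_eq_abs, abs_le]
        constructor
        · exact le_max_left _ _
        · exact max_le (by linarith : -M ≤ M) (min_le_left _ _)) with hg
  have hgapp : ∀ z0 θ, g z0 θ = max (-M) (min M (f (z0, θ))) := fun _ _ => rfl
  -- finite cover
  obtain ⟨t, ht⟩ := isCompact_univ.elim_finite_subcover (fun z : Z => Metric.ball z η)
    (fun z => Metric.isOpen_ball)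
    (fun z _ => Set.mem_iUnion.mpr ⟨z, Metric.mem_ball_self hη0⟩)
  -- eventually near limit for finitely many clamps
  have hev : ∀ᶠ m in atTop, ∀ i ∈ t, |(∫ θ, g i θ ∂(Qm m)) - ∫ θ, g i θ ∂Q| < ε' := by
    rw [eventually_all_finset]
    intro i _
    have := Metric.tendsto_nhds.mp (hweak (g i)) ε' hε'0
    filter_upwards [this] with m hm
    rw [Real.dist_eq] at hm; exact hm
  obtain ⟨N, hN⟩ := eventually_atTop.mp hev
  refine ⟨N, fun m hm => ?_⟩
  have hNm := hN m hm
  haveI := hQm m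
  haveI := hQ
  obtain ⟨hipm, hintpm, hiwm, hifm⟩ := key (Qm m) (hQm m) (hmomQm m)
  obtain ⟨hipQ, hintpQ, hiwQ, hifQ⟩ := key Q hQ hmomQ
  -- bound per measure: nearby z
  have hnear : ∀ (μ : Measure (EuclideanSpace ℝ (Fin d))), IsProbabilityMeasure μ → Integrable p μ →
      ((∫ θ, p θ ∂μ) ≤ C') → (∀ z : Z, Integrable (fun θ => f (z, θ)) μ) →
      ∀ z z' : Z, dist z z' < η →
      |(∫ θ, f (z, θ) ∂μ) - ∫ θ, f (z', θ) ∂μ| ≤ 3 * ε' := by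
    intro μ hμ hip hintp hif z z' hzz
    haveI := hμ
    have h1 : |(∫ θ, f (z, θ) ∂μ) - ∫ θ, f (z', θ) ∂μ|
        = |∫ θ, (f (z, θ) - f (z', θ)) ∂μ| := by rw [integral_sub (hif z) (hif z')]
    rw [h1]
    have h2 : |∫ θ, (f (z, θ) - f (z', θ)) ∂μ| ≤ ∫ θ, |f (z, θ) - f (z', θ)| ∂μ := by
      simpa [Real.norm_eq_abs] using
        norm_integral_le_integral_norm (μ := μ) (f := fun θ => f (z, θ) - f (z', θ))
    refine le_trans h2 ?_
    have h3 : ∫ θ, |f (z, θ) - f (z', θ)| ∂μ ≤ ∫ θ, (ε' + (2 / M ^ δ) * p θ) ∂μ := by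
      refine integral_mono ((hif z).sub (hif z')).abs
        ((integrable_const ε').add (hip.const_mul _)) ?_
      intro θ; exact hptw z z' hzz θ
    refine le_trans h3 ?_
    rw [integral_add (integrable_const ε') (hip.const_mul _), integral_const,
      integral_const_mul]
    simp only [measure_univ, probReal_univ, ENNReal.toReal_one, smul_eq_mul, one_mul]
    have h4 : (2 / M ^ δ) * ∫ θ, p θ ∂μ ≤ (2 / M ^ δ) * C' := by
      apply mul_le_mul_of_nonneg_left hintp (by positivity)
    have h5 : (2 / M ^ δ) * C' = 2 * (C' / M ^ δ) := by ring
    linarith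
  -- bound per measure: clamp error
  have hclamp : ∀ (μ : Measure (EuclideanSpace ℝ (Fin d))), IsProbabilityMeasure μ → Integrable p μ →
      ((∫ θ, p θ ∂μ) ≤ C') → (∀ z : Z, Integrable (fun θ => f (z, θ)) μ) →
      ∀ z0 : Z, |(∫ θ, f (z0, θ) ∂μ) - ∫ θ, g z0 θ ∂μ| ≤ ε' := by
    intro μ hμ hip hintp hif z0
    haveI := hμ
    have hig : Integrable (fun θ => g z0 θ) μ := (g z0).integrable μ
    have h1 : |(∫ θ, f (z0, θ) ∂μ) - ∫ θ, g z0 θ ∂μ|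
        = |∫ θ, (f (z0, θ) - g z0 θ) ∂μ| := by rw [integral_sub (hif z0) hig]
    rw [h1]
    have h2 : |∫ θ, (f (z0, θ) - g z0 θ) ∂μ| ≤ ∫ θ, |f (z0, θ) - g z0 θ| ∂μ := by
      simpa [Real.norm_eq_abs] using
        norm_integral_le_integral_norm (μ := μ) (f := fun θ => f (z0, θ) - g z0 θ)
    refine le_trans h2 ?_
    have h3 : ∫ θ, |f (z0, θ) - g z0 θ| ∂μ ≤ ∫ θ, (1 / M ^ δ) * p θ ∂μ := by
      refine integral_mono ((hif z0).sub hig).abs (hip.const_mul _) ?_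
      intro θ
      show |f (z0, θ) - g z0 θ| ≤ 1 / M ^ δ * p θ
      have hgv : g z0 θ = max (-M) (min M (f (z0, θ))) := rfl
      rw [hgv]
      have := aux_clamp_bound hM1 hδ (hw0 θ) (henv z0 θ)
      calc |f (z0, θ) - max (-M) (min M (f (z0, θ)))| ≤ w θ ^ (1 + δ) / M ^ δ := this
        _ = (1 / M ^ δ) * p θ := by rw [hp]; ring
    refine le_trans h3 ?_
    rw [integral_const_mul]
    have h4 : (1 / M ^ δ) * ∫ θ, p θ ∂μ ≤ (1 / M ^ δ) * C' :=
      mul_le_mul_of_nonneg_left hintp (by positivity)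
    have h5 : (1 / M ^ δ) * C' = C' / M ^ δ := by ring
    linarith
  -- per z bound
  have hz : ∀ z : Z, |(∫ θ, f (z, θ) ∂(Qm m)) - ∫ θ, f (z, θ) ∂Q| ≤ 9 * ε' := by
    intro z
    obtain ⟨i, hit, hzi⟩ : ∃ i ∈ t, z ∈ Metric.ball i η := by
      have := ht (Set.mem_univ z)
      simpa using Set.mem_iUnion₂.mp this
    have hdzi : dist z i < η := Metric.mem_ball.mp hzi
    have b1 := hnear (Qm m) (hQm m) hipm hintpm hifm z i hdzi
    have b2 := hclamp (Qm m) (hQm m) hipm hintpm hifm i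
    have b3 := hNm i hit
    have b4 := hclamp Q hQ hipQ hintpQ hifQ i
    have b5 := hnear Q hQ hipQ hintpQ hifQ i z (by rwa [dist_comm])
    calc |(∫ θ, f (z, θ) ∂(Qm m)) - ∫ θ, f (z, θ) ∂Q|
        ≤ |(∫ θ, f (z, θ) ∂(Qm m)) - ∫ θ, f (i, θ) ∂(Qm m)|
          + |(∫ θ, f (i, θ) ∂(Qm m)) - ∫ θ, g i θ ∂(Qm m)|
          + |(∫ θ, g i θ ∂(Qm m)) - ∫ θ, g i θ ∂Q|
          + |(∫ θ, g i θ ∂Q) - ∫ θ, f (i, θ) ∂Q|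
          + |(∫ θ, f (i, θ) ∂Q) - ∫ θ, f (z, θ) ∂Q| := by
            have := abs_sub_le ((∫ θ, f (z, θ) ∂(Qm m))) (∫ θ, f (i, θ) ∂(Qm m))
              (∫ θ, f (z, θ) ∂Q)
            have h2 := abs_sub_le ((∫ θ, f (i, θ) ∂(Qm m))) (∫ θ, g i θ ∂(Qm m))
              (∫ θ, f (z, θ) ∂Q)
            have h3 := abs_sub_le ((∫ θ, g i θ ∂(Qm m))) (∫ θ, g i θ ∂Q)
              (∫ θ, f (z, θ) ∂Q)
            have h4 := abs_sub_le ((∫ θ, g i θ ∂Q)) (∫ θ, f (i, θ) ∂Q)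
              (∫ θ, f (z, θ) ∂Q)
            linarith
      _ ≤ 3 * ε' + ε' + ε' + ε' + 3 * ε' := by
            have b4' : |(∫ θ, g i θ ∂Q) - ∫ θ, f (i, θ) ∂Q| ≤ ε' := by
              rw [abs_sub_comm]; exact b4
            have b5' : |(∫ θ, f (i, θ) ∂Q) - ∫ θ, f (z, θ) ∂Q| ≤ 3 * ε' := b5
            linarith [b3.le]
      _ = 9 * ε' := by ring
  have hsup : (⨆ z : Z, |(∫ θ, f (z, θ) ∂(Qm m)) - ∫ θ, f (z, θ) ∂Q|) ≤ 9 * ε' :=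
    Real.iSup_le hz (by positivity)
  have hsup0 : 0 ≤ ⨆ z : Z, |(∫ θ, f (z, θ) ∂(Qm m)) - ∫ θ, f (z, θ) ∂Q| :=
    Real.iSup_nonneg fun z => abs_nonneg _
  rw [Real.dist_eq, sub_zero, abs_of_nonneg hsup0]
  have : 9 * ε' < ε := by rw [hε'def]; linarith
  linarith
end

section
/- When EB beats the no-information design in the two-stratum problem: Let s > 0, N > 0, a₁, a₂ ≥ 0 with |a₂ − a₁| < N, and let â₁, â₂ ≥ 0 with |â₂ − â₁| < N be plug-in estimates. Define f(t) = s²/(t + a₁) + s²/(N − t + a₂), Δâ = â₂ − â₁, and Δa = a₂ − a₁. Then f((N + Δâ)/2) ≤ f(N/2) if and only if Δâ · (Δâ − 2Δa) ≤ 0, i.e., if and only if Δâ · Δa ≥ 0 and |Δâ| ≤ 2|Δa|. -/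
/-!
Write `u = t + a₁` and `v = N - t + a₂`. Their sum `N + a₁ + a₂` does not depend on `t`, so
`f t = s² (u + v) / (u v)` is smaller exactly where the product `u v` is larger. Moving from the
balanced point `t = N/2` to `t = (N + Δâ)/2` changes `u v` by `-Δâ (Δâ - 2 Δa) / 4`.
-/

section

variable {α : Type*} [Field α] [LinearOrder α] [IsStrictOrderedRing α]

theorem div_add_div_le_div_add_div_iff_mul_le_mul {c u v u' v' : α} (hc : 0 < c)
    (hu : 0 < u) (hv : 0 < v) (hu' : 0 < u') (hv' : 0 < v') (hsum : u + v = u' + v') :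
    c / u + c / v ≤ c / u' + c / v' ↔ u' * v' ≤ u * v := by
  have hrecip {p q : α} (hp : p ≠ 0) (hq : q ≠ 0) : c / p + c / q = c * (p + q) / (p * q) := by
    field_simp; ring
  rw [hrecip hu.ne' hv.ne', hrecip hu'.ne' hv'.ne', hsum]
  exact div_le_div_iff_of_pos_left (by positivity) (by positivity) (by positivity)

theorem mul_sub_two_mul_nonpos_iff {x y : α} :
    x * (x - 2 * y) ≤ 0 ↔ 0 ≤ x * y ∧ |x| ≤ 2 * |y| := by
  rw [mul_sub, sub_nonpos, mul_left_comm]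
  constructor
  · intro h
    have hxy : 0 ≤ x * y := by nlinarith [mul_self_nonneg x]
    have habs : |x| * |y| = x * y := by rw [← abs_mul, abs_of_nonneg hxy]
    refine ⟨hxy, ?_⟩
    rcases (abs_nonneg x).eq_or_lt with hx | hx
    · rw [← hx]; positivity
    · refine le_of_mul_le_mul_left ?_ hx
      calc |x| * |x| = x * x := abs_mul_abs_self x
        _ ≤ 2 * (x * y) := h
        _ = |x| * (2 * |y|) := by rw [← habs]; ring
  · rintro ⟨hxy, hle⟩
    have habs : |x| * |y| = x * y := by rw [← abs_mul, abs_of_nonneg hxy]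
    calc x * x = |x| * |x| := (abs_mul_abs_self x).symm
      _ ≤ |x| * (2 * |y|) := mul_le_mul_of_nonneg_left hle (abs_nonneg x)
      _ = 2 * (x * y) := by rw [← habs]; ring

end

theorem two_stratum_eb_beats_ni_general
    (s N a₁ a₂ ah₁ ah₂ : ℝ) (hs : 0 < s)
    (ha₁ : 0 ≤ a₁) (ha₂ : 0 ≤ a₂)
    (hinthat : |ah₂ - ah₁| < N)
    (f : ℝ → ℝ) (hf : ∀ t, f t = s ^ 2 / (t + a₁) + s ^ 2 / (N - t + a₂)) :
    (f ((N + (ah₂ - ah₁)) / 2) ≤ f (N / 2) ↔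
      (ah₂ - ah₁) * ((ah₂ - ah₁) - 2 * (a₂ - a₁)) ≤ 0) ∧
    ((ah₂ - ah₁) * ((ah₂ - ah₁) - 2 * (a₂ - a₁)) ≤ 0 ↔
      0 ≤ (ah₂ - ah₁) * (a₂ - a₁) ∧ |ah₂ - ah₁| ≤ 2 * |a₂ - a₁|) := by
  set Δ := ah₂ - ah₁
  obtain ⟨hΔlo, hΔhi⟩ := abs_lt.mp hinthat
  refine ⟨?_, mul_sub_two_mul_nonpos_iff⟩
  have hprod : ((N + Δ) / 2 + a₁) * (N - (N + Δ) / 2 + a₂) =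
      (N / 2 + a₁) * (N - N / 2 + a₂) - Δ * (Δ - 2 * (a₂ - a₁)) / 4 := by
    ring
  rw [hf, hf, div_add_div_le_div_add_div_iff_mul_le_mul (by positivity) (by linarith)
    (by linarith) (by linarith) (by linarith) (by ring), hprod]
  constructor <;> intro <;> linarith

/-- When the empirical Bayes allocation beats the no-information (balanced)
allocation in the two-stratum problem: with `f t = s²/(t+a₁) + s²/(N−t+a₂)`,
`Δâ = ah₂ − ah₁` (plug-in estimates) and `Δa = a₂ − a₁`, we have
`f ((N+Δâ)/2) ≤ f (N/2)` iff `Δâ (Δâ − 2Δa) ≤ 0`, iff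
(`Δâ·Δa ≥ 0` and `|Δâ| ≤ 2|Δa|`). -/
theorem two_stratum_eb_beats_ni
    (s N a₁ a₂ ah₁ ah₂ : ℝ) (hs : 0 < s) (hN : 0 < N)
    (ha₁ : 0 ≤ a₁) (ha₂ : 0 ≤ a₂) (hint : |a₂ - a₁| < N)
    (hah₁ : 0 ≤ ah₁) (hah₂ : 0 ≤ ah₂) (hinthat : |ah₂ - ah₁| < N)
    (f : ℝ → ℝ) (hf : ∀ t, f t = s ^ 2 / (t + a₁) + s ^ 2 / (N - t + a₂)) :
    (f ((N + (ah₂ - ah₁)) / 2) ≤ f (N / 2) ↔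
      (ah₂ - ah₁) * ((ah₂ - ah₁) - 2 * (a₂ - a₁)) ≤ 0) ∧
    ((ah₂ - ah₁) * ((ah₂ - ah₁) - 2 * (a₂ - a₁)) ≤ 0 ↔
      0 ≤ (ah₂ - ah₁) * (a₂ - a₁) ∧ |ah₂ - ah₁| ≤ 2 * |a₂ - a₁|) :=
  two_stratum_eb_beats_ni_general s N a₁ a₂ ah₁ ah₂ hs ha₁ ha₂ hinthat f hf
end

section
/- Second-order design regret bound: Let H be a convex subset of ℝ^k, let f : ℝ^k → ℝ be differentiable, and suppose there exists m > 0 such that for all η₁, η₂ ∈ H, f(η₂) ≤ f(η₁) + ⟨∇f(η₁), η₂ − η₁⟩ − (m/2)‖η₂ − η₁‖². Let η_O ∈ H be a maximizer of f over H. Let g : ℝ^k → ℝ be differentiable, let η̂ ∈ H satisfy ∇g(η̂) = 0, and suppose r ≥ 0 satisfies ‖∇g(η) − ∇f(η)‖ ≤ r for all η ∈ H. Then f(η_O) − f(η̂) ≤ r²/(2m). -/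
/-! At `η̂` the gradient of `g` vanishes, so `‖∇f(η̂)‖ ≤ r`. Strong concavity at `η̂` in the
direction `d = η_O - η̂` then bounds the regret by `r‖d‖ - (m/2)‖d‖²`, and this concave quadratic
in `‖d‖` never exceeds `r²/(2m)`. -/

open scoped RealInnerProductSpace

theorem mul_sub_half_mul_sq_le_sq_div {m : ℝ} (hm : 0 < m) (r t : ℝ) :
    r * t - m / 2 * t ^ 2 ≤ r ^ 2 / (2 * m) := by
  rw [le_div_iff₀ (by positivity)]
  nlinarith [sq_nonneg (r - m * t)]

theorem sub_le_sq_div_of_le_add_inner_sub_sq {E : Type*} [NormedAddCommGroup E]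
    [InnerProductSpace ℝ E] {x y v : E} {a b m r : ℝ} (hm : 0 < m) (hv : ‖v‖ ≤ r)
    (h : b ≤ a + ⟪v, y - x⟫ - m / 2 * ‖y - x‖ ^ 2) :
    b - a ≤ r ^ 2 / (2 * m) := by
  have hinner : ⟪v, y - x⟫ ≤ r * ‖y - x‖ :=
    (real_inner_le_norm v (y - x)).trans (by gcongr)
  linarith [mul_sub_half_mul_sq_le_sq_div hm r ‖y - x‖]

theorem second_order_regret_bound_general
    {k : ℕ} {H : Set (EuclideanSpace ℝ (Fin k))}
    (f : EuclideanSpace ℝ (Fin k) → ℝ)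
    (m : ℝ) (hm : 0 < m)
    (hconc : ∀ η₁ ∈ H, ∀ η₂ ∈ H,
      f η₂ ≤ f η₁ + ⟪gradient f η₁, η₂ - η₁⟫ - m / 2 * ‖η₂ - η₁‖ ^ 2)
    (ηO : EuclideanSpace ℝ (Fin k)) (hηO : ηO ∈ H)
    (g : EuclideanSpace ℝ (Fin k) → ℝ)
    (ηhat : EuclideanSpace ℝ (Fin k)) (hηhat : ηhat ∈ H)
    (hcrit : gradient g ηhat = 0)
    (r : ℝ)
    (hgrad : ∀ η ∈ H, ‖gradient g η - gradient f η‖ ≤ r) :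
    f ηO - f ηhat ≤ r ^ 2 / (2 * m) := by
  have hgrad_f : ‖gradient f ηhat‖ ≤ r := by
    simpa [hcrit] using hgrad ηhat hηhat
  exact sub_le_sq_div_of_le_add_inner_sub_sq hm hgrad_f (hconc ηhat hηhat ηO hηO)

/-- Second-order design regret bound: if the oracle objective `f` is `m`-strongly
concave on the convex feasible set `H` (first-order upper bound with curvature
`m`), `η_O` maximizes `f` over `H`, the plug-in objective `g` has vanishing
gradient at its interior maximizer `η̂ ∈ H`, and the gradients of `g` and `f`
differ by at most `r` uniformly over `H`, then `f η_O − f η̂ ≤ r² / (2m)`. -/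
theorem second_order_regret_bound
    {k : ℕ} {H : Set (EuclideanSpace ℝ (Fin k))} (hconv : Convex ℝ H)
    (f : EuclideanSpace ℝ (Fin k) → ℝ) (hf : Differentiable ℝ f)
    (m : ℝ) (hm : 0 < m)
    (hconc : ∀ η₁ ∈ H, ∀ η₂ ∈ H,
      f η₂ ≤ f η₁ + ⟪gradient f η₁, η₂ - η₁⟫ - m / 2 * ‖η₂ - η₁‖ ^ 2)
    (ηO : EuclideanSpace ℝ (Fin k)) (hηO : ηO ∈ H)
    (hmax : ∀ η ∈ H, f η ≤ f ηO)
    (g : EuclideanSpace ℝ (Fin k) → ℝ) (hg : Differentiable ℝ g)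
    (ηhat : EuclideanSpace ℝ (Fin k)) (hηhat : ηhat ∈ H)
    (hcrit : gradient g ηhat = 0)
    (r : ℝ) (hr : 0 ≤ r)
    (hgrad : ∀ η ∈ H, ‖gradient g η - gradient f η‖ ≤ r) :
    f ηO - f ηhat ≤ r ^ 2 / (2 * m) :=
  second_order_regret_bound_general f m hm hconc ηO hηO g ηhat hηhat hcrit r hgrad
end
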